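/- Let β = (∫_0^1 (1−s⁴)^{−1/4} ds)⁴ and R > 0. Define u : [0,R] → ℝ implicitly by F(u(r)) = β^{1/4} r / R, where F(t) = ∫_t^1 (1−s⁴)^{−1/4} ds. Then u is well-defined, continuous, strictly decreasing with u(0) = 1 and u(R) = 0, is C² on (0,R), and satisfies u'(r)² u''(r) + (β/R⁴) u(r)³ = 0 on (0,R). -/

import Mathlib

/-
With `c = β^{1/4} / R = F 0 / R`, the function `u r = F⁻¹ (c r)` exists because `F` is a
continuous strictly decreasing bijection `[0, 1] → [0, F 0]`; the integrand is integrable at `1`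
since `(1 - s⁴)^{-1/4} ≤ (1 - s)^{-1/4}`. The inverse function rule turns
`F' = -(1 - t⁴)^{-1/4}` into the autonomous equation `u' = g(u)` with `g t = -c (1 - t⁴)^{1/4}`.
Hence `u'' = g'(u) g(u)`, so `u'² u'' = g(u)³ g'(u)`, which is `-c⁴ u³` because differentiating
`g⁴ = c⁴ (1 - t⁴)` gives `g³ g' = -c⁴ t³`; and `c⁴ = β / R⁴`.
-/

noncomputable def F (t : ℝ) : ℝ := ∫ s in t..1, (1 - s ^ 4) ^ (-(1:ℝ)/4)

noncomputable def betaConst : ℝ := (∫ s in (0:ℝ)..1, (1 - s ^ 4) ^ (-(1:ℝ)/4)) ^ 4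

open Set Filter Topology MeasureTheory

section AutonomousODE

variable {𝕜 : Type*} [NontriviallyNormedField 𝕜] {u g : 𝕜 → 𝕜} {s t : Set 𝕜}

theorem hasDerivAt_deriv_of_hasDerivAt_comp {x g' : 𝕜} (hs : s ∈ 𝓝 x)
    (hu : ∀ y ∈ s, HasDerivAt u (g (u y)) y) (hg : HasDerivAt g g' (u x)) :
    HasDerivAt (deriv u) (g' * g (u x)) x :=
  (hg.comp x (hu x (mem_of_mem_nhds hs))).congr_of_eventuallyEq
    (eventually_of_mem hs fun y hy => (hu y hy).deriv)

theorem contDiffOn_two_of_hasDerivAt_comp (hs : IsOpen s) (hg : ContDiffOn 𝕜 1 g t)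
    (hst : MapsTo u s t) (hu : ∀ x ∈ s, HasDerivAt u (g (u x)) x) :
    ContDiffOn 𝕜 2 u s := by
  have hderiv : EqOn (deriv u) (g ∘ u) s := fun x hx => (hu x hx).deriv
  have hdiff : DifferentiableOn 𝕜 u s := fun x hx =>
    (hu x hx).differentiableAt.differentiableWithinAt
  have hC1 : ContDiffOn 𝕜 1 u s := by
    rw [show (1 : WithTop ℕ∞) = 0 + 1 from rfl, contDiffOn_succ_iff_deriv_of_isOpen hs]
    exact ⟨hdiff, by simp, contDiffOn_zero.2 <|
      (hg.continuousOn.comp hdiff.continuousOn hst).congr hderiv⟩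
  rw [show (2 : WithTop ℕ∞) = 1 + 1 from rfl, contDiffOn_succ_iff_deriv_of_isOpen hs]
  exact ⟨hdiff, by simp, (hg.comp hC1 hst).congr hderiv⟩

end AutonomousODE

theorem StrictAntiOn.strictAntiOn_of_rightInvOn {α β : Type*} [LinearOrder α] [Preorder β]
    {f : α → β} {g : β → α} {s : Set α} {t : Set β}
    (hf : StrictAntiOn f s) (hg : MapsTo g t s) (hfg : RightInvOn g f t) :
    StrictAntiOn g t := fun y hy y' hy' hlt =>
  (hf.lt_iff_gt (hg hy) (hg hy')).1 <| by rwa [hfg hy, hfg hy']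

theorem exists_continuous_rightInvOn_of_strictAntiOn {f : ℝ → ℝ} {a b : ℝ} (hab : a ≤ b)
    (hf : ContinuousOn f (Icc a b)) (hanti : StrictAntiOn f (Icc a b)) :
    ∃ g : ℝ → ℝ, Continuous g ∧ MapsTo g univ (Icc a b) ∧
      RightInvOn g f (Icc (f b) (f a)) := by
  have hfab : f b ≤ f a := hanti.antitoneOn ⟨le_rfl, hab⟩ ⟨hab, le_rfl⟩ hab
  let f' : Icc a b → Icc (f b) (f a) := fun x =>
    ⟨f x, hanti.antitoneOn x.2 ⟨hab, le_rfl⟩ x.2.2,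
      hanti.antitoneOn ⟨le_rfl, hab⟩ x.2 x.2.1⟩
  have hbij : Function.Bijective f' := by
    refine ⟨fun x y hxy => Subtype.ext (hanti.injOn x.2 y.2 (congrArg Subtype.val hxy)), ?_⟩
    intro y
    obtain ⟨x, hx, hfx⟩ := intermediate_value_Icc' hab hf y.2
    exact ⟨⟨x, hx⟩, Subtype.ext hfx⟩
  let e := (hf.domRestrict.subtype_mk _ : Continuous f').homeoOfEquivCompactToT2
    (f := Equiv.ofBijective f' hbij)
  refine ⟨fun y => e.symm (projIcc _ _ hfab y), by fun_prop, fun y _ => (e.symm _).2,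
    fun y hy => ?_⟩
  change f (e.symm (projIcc _ _ hfab y)) = y
  rw [projIcc_of_mem hfab hy]
  exact congrArg Subtype.val (e.apply_symm_apply ⟨y, hy⟩)

noncomputable def quarticSlope (c t : ℝ) : ℝ := -(c * (1 - t ^ 4) ^ (4⁻¹ : ℝ))

theorem quarticSlope_pow_four {c t : ℝ} (ht : 0 ≤ 1 - t ^ 4) :
    quarticSlope c t ^ 4 = c ^ 4 * (1 - t ^ 4) := by
  have : ((1 - t ^ 4) ^ (4⁻¹ : ℝ)) ^ 4 = 1 - t ^ 4 := by
    simpa using Real.rpow_inv_natCast_pow ht (n := 4) (by norm_num)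
  rw [quarticSlope, neg_pow, mul_pow, this]
  ring

theorem contDiffAt_quarticSlope (c : ℝ) {t : ℝ} (ht : 1 - t ^ 4 ≠ 0) :
    ContDiffAt ℝ 1 (quarticSlope c) t :=
  have hinner : ContDiffAt ℝ 1 (fun s : ℝ => 1 - s ^ 4) t := by fun_prop
  ((Real.contDiffAt_rpow_const_of_ne ht).comp t hinner).const_smul c |>.neg

theorem quarticSlope_pow_three_mul_deriv (c : ℝ) {t : ℝ} (ht : 0 < 1 - t ^ 4) :
    quarticSlope c t ^ 3 * deriv (quarticSlope c) t = -(c ^ 4 * t ^ 3) := by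
  have hdiff := ((contDiffAt_quarticSlope c ht.ne').differentiableAt one_ne_zero).hasDerivAt
  have hpow : (fun s => quarticSlope c s ^ 4) =ᶠ[𝓝 t] fun s => c ^ 4 * (1 - s ^ 4) := by
    filter_upwards [continuousAt_const.eventually_lt
      (by fun_prop : ContinuousAt (fun s : ℝ => 1 - s ^ 4) t) ht] with s hs
    exact quarticSlope_pow_four hs.le
  have := (hdiff.pow 4).unique <|
    (((hasDerivAt_pow 4 t).const_sub 1).const_mul (c ^ 4)).congr_of_eventuallyEq hpow
  norm_num at this
  linear_combination this / 4

theorem one_sub_pow_four_pos {t : ℝ} (ht₀ : 0 ≤ t) (ht₁ : t < 1) : 0 < 1 - t ^ 4 := by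
  have := pow_lt_one₀ ht₀ ht₁ (n := 4) (by norm_num)
  linarith

theorem intervalIntegrable_integrand_F :
    IntervalIntegrable (fun s : ℝ => (1 - s ^ 4) ^ (-(1:ℝ)/4)) volume 0 1 := by
  have hdom : IntervalIntegrable (fun s : ℝ => (1 - s) ^ (-(1:ℝ)/4)) volume 0 1 := by
    simpa using ((intervalIntegral.intervalIntegrable_rpow' (a := 0) (b := 1) (r := -(1:ℝ)/4)
      (by norm_num)).comp_sub_left 1).symm
  refine hdom.mono_fun
    (by fun_prop : Measurable fun s : ℝ => (1 - s ^ 4) ^ (-(1:ℝ)/4)).aestronglyMeasurable ?_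
  rw [uIoc_of_le zero_le_one]
  refine (ae_restrict_mem measurableSet_Ioc).mono fun s ⟨hs₀, hs₁⟩ => ?_
  rcases hs₁.eq_or_lt with rfl | hs₁
  · norm_num
  have hle : 1 - s ≤ 1 - s ^ 4 := by
    linarith [pow_le_of_le_one hs₀.le hs₁.le (by norm_num : 4 ≠ 0)]
  dsimp only
  rw [Real.norm_of_nonneg (Real.rpow_nonneg (one_sub_pow_four_pos hs₀.le hs₁).le _),
    Real.norm_of_nonneg (Real.rpow_nonneg (by linarith) _)]
  exact Real.rpow_le_rpow_of_nonpos (by linarith) hle (by norm_num)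

theorem intervalIntegrable_integrand_F_of_mem {a b : ℝ} (ha : a ∈ Icc (0:ℝ) 1)
    (hb : b ∈ Icc (0:ℝ) 1) :
    IntervalIntegrable (fun s : ℝ => (1 - s ^ 4) ^ (-(1:ℝ)/4)) volume a b :=
  intervalIntegrable_integrand_F.mono_set <| by
    rw [uIcc_of_le zero_le_one]
    exact uIcc_subset_Icc ha hb

theorem F_one : F 1 = 0 := intervalIntegral.integral_same

theorem continuousOn_F : ContinuousOn F (Icc 0 1) := by
  have := intervalIntegral.continuousOn_primitive_interval_left (a := 0) (b := 1) <| by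
    rw [uIcc_of_le zero_le_one]
    exact (intervalIntegrable_iff_integrableOn_Icc_of_le zero_le_one).1
      intervalIntegrable_integrand_F
  rwa [uIcc_of_le zero_le_one] at this

theorem hasDerivAt_F {t : ℝ} (ht : t ∈ Ioo (0:ℝ) 1) :
    HasDerivAt F (-((1 - t ^ 4) ^ (4⁻¹ : ℝ))⁻¹) t := by
  have hcont : ContinuousOn (fun s : ℝ => (1 - s ^ 4) ^ (-(1:ℝ)/4)) (Ioo 0 1) := by
    refine ContinuousOn.rpow_const (by fun_prop) fun s hs => Or.inl ?_
    exact (one_sub_pow_four_pos hs.1.le hs.2).ne'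
  have := intervalIntegral.integral_hasDerivAt_left
    (intervalIntegrable_integrand_F_of_mem (Ioo_subset_Icc_self ht) ⟨zero_le_one, le_rfl⟩)
    (hcont.stronglyMeasurableAtFilter isOpen_Ioo t ht)
    (hcont.continuousAt (isOpen_Ioo.mem_nhds ht))
  rwa [← Real.rpow_neg (one_sub_pow_four_pos ht.1.le ht.2).le,
    show -(4⁻¹ : ℝ) = -1 / 4 by norm_num]

theorem strictAntiOn_F : StrictAntiOn F (Icc 0 1) := by
  refine strictAntiOn_of_deriv_neg (convex_Icc 0 1) continuousOn_F fun t ht => ?_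
  rw [interior_Icc] at ht
  rw [(hasDerivAt_F ht).deriv, neg_lt_zero, inv_pos]
  exact Real.rpow_pos_of_pos (one_sub_pow_four_pos ht.1.le ht.2) _

theorem F_zero_pos : 0 < F 0 :=
  F_one ▸ strictAntiOn_F ⟨le_rfl, zero_le_one⟩ ⟨zero_le_one, le_rfl⟩ zero_lt_one

theorem betaConst_eq : betaConst = F 0 ^ 4 := rfl

theorem betaConst_rpow_quarter : betaConst ^ ((1:ℝ)/4) = F 0 := by
  rw [betaConst_eq, ← Real.rpow_natCast, ← Real.rpow_mul F_zero_pos.le]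
  norm_num

noncomputable def invF : ℝ → ℝ :=
  Classical.choose <|
    exists_continuous_rightInvOn_of_strictAntiOn zero_le_one continuousOn_F strictAntiOn_F

theorem invF_spec :
    Continuous invF ∧ MapsTo invF univ (Icc 0 1) ∧ RightInvOn invF F (Icc (F 1) (F 0)) :=
  Classical.choose_spec <|
    exists_continuous_rightInvOn_of_strictAntiOn zero_le_one continuousOn_F strictAntiOn_F

theorem continuous_invF : Continuous invF := invF_spec.1

theorem invF_mem_Icc (y : ℝ) : invF y ∈ Icc 0 1 := invF_spec.2.1 (mem_univ y)

theorem rightInvOn_invF : RightInvOn invF F (Icc 0 (F 0)) := F_one ▸ invF_spec.2.2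

theorem strictAntiOn_invF : StrictAntiOn invF (Icc 0 (F 0)) :=
  strictAntiOn_F.strictAntiOn_of_rightInvOn (fun y _ => invF_mem_Icc y) rightInvOn_invF

theorem invF_zero : invF 0 = 1 :=
  strictAntiOn_F.injOn (invF_mem_Icc 0) ⟨zero_le_one, le_rfl⟩ <| by
    rw [rightInvOn_invF ⟨le_rfl, F_zero_pos.le⟩, F_one]

theorem invF_F_zero : invF (F 0) = 0 :=
  strictAntiOn_F.injOn (invF_mem_Icc (F 0)) ⟨le_rfl, zero_le_one⟩ <|
    rightInvOn_invF ⟨F_zero_pos.le, le_rfl⟩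

theorem invF_mem_Ioo {y : ℝ} (hy : y ∈ Ioo 0 (F 0)) : invF y ∈ Ioo 0 1 := by
  have hIcc : y ∈ Icc 0 (F 0) := Ioo_subset_Icc_self hy
  constructor
  · simpa [invF_F_zero] using strictAntiOn_invF hIcc ⟨F_zero_pos.le, le_rfl⟩ hy.2
  · simpa [invF_zero] using strictAntiOn_invF ⟨le_rfl, F_zero_pos.le⟩ hIcc hy.1

theorem hasDerivAt_invF {y : ℝ} (hy : y ∈ Ioo 0 (F 0)) :
    HasDerivAt invF (quarticSlope 1 (invF y)) y := by
  have hx := invF_mem_Ioo hy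
  have hpos : 0 < (1 - invF y ^ 4) ^ (4⁻¹ : ℝ) :=
    Real.rpow_pos_of_pos (one_sub_pow_four_pos hx.1.le hx.2) _
  have := (hasDerivAt_F hx).of_local_left_inverse continuous_invF.continuousAt
    (by simpa using hpos.ne')
    (eventually_of_mem (isOpen_Ioo.mem_nhds hy) fun _ hz =>
      rightInvOn_invF (Ioo_subset_Icc_self hz))
  simpa [quarticSlope] using this

theorem mapsTo_mul_div_Icc {a R : ℝ} (ha : 0 ≤ a) (hR : 0 < R) :
    MapsTo (fun r => a * r / R) (Icc 0 R) (Icc 0 a) := fun r ⟨hr₀, hr₁⟩ =>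
  ⟨by positivity, show a * r / R ≤ a by
    rw [mul_div_assoc]; exact mul_le_of_le_one_right ha (div_le_one_of_le₀ hr₁ hR.le)⟩

theorem mapsTo_mul_div_Ioo {a R : ℝ} (ha : 0 < a) (hR : 0 < R) :
    MapsTo (fun r => a * r / R) (Ioo 0 R) (Ioo 0 a) := fun r ⟨hr₀, hr₁⟩ =>
  ⟨by positivity, show a * r / R < a by
    rw [mul_div_assoc]; exact mul_lt_of_lt_one_right ha ((div_lt_one hR).2 hr₁)⟩

noncomputable def radialEigenfunction (R r : ℝ) : ℝ := invF (F 0 * r / R)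

theorem hasDerivAt_radialEigenfunction {R r : ℝ} (hR : 0 < R) (hr : r ∈ Ioo 0 R) :
    HasDerivAt (radialEigenfunction R)
      (quarticSlope (F 0 / R) (radialEigenfunction R r)) r := by
  have := (hasDerivAt_invF (mapsTo_mul_div_Ioo F_zero_pos hR hr)).comp r
    (((hasDerivAt_id r).const_mul (F 0)).div_const R)
  refine this.congr_deriv ?_
  simp only [quarticSlope, radialEigenfunction]
  ring

theorem mapsTo_radialEigenfunction_Ioo {R : ℝ} (hR : 0 < R) :
    MapsTo (radialEigenfunction R) (Ioo 0 R) (Ioo 0 1) := fun _ hr =>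
  invF_mem_Ioo (mapsTo_mul_div_Ioo F_zero_pos hR hr)

theorem strictAntiOn_radialEigenfunction {R : ℝ} (hR : 0 < R) :
    StrictAntiOn (radialEigenfunction R) (Icc 0 R) :=
  have := F_zero_pos
  strictAntiOn_invF.comp_strictMonoOn (fun a _ b _ hab => by gcongr)
    (mapsTo_mul_div_Icc F_zero_pos.le hR)

theorem contDiffOn_radialEigenfunction {R : ℝ} (hR : 0 < R) :
    ContDiffOn ℝ 2 (radialEigenfunction R) (Ioo 0 R) :=
  contDiffOn_two_of_hasDerivAt_comp isOpen_Ioo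
    (fun _ ht =>
      (contDiffAt_quarticSlope _ (one_sub_pow_four_pos ht.1.le ht.2).ne').contDiffWithinAt)
    (mapsTo_radialEigenfunction_Ioo hR) fun _ hr => hasDerivAt_radialEigenfunction hR hr

theorem deriv_sq_mul_deriv_deriv_radialEigenfunction {R r : ℝ} (hR : 0 < R)
    (hr : r ∈ Ioo 0 R) :
    deriv (radialEigenfunction R) r ^ 2 * deriv (deriv (radialEigenfunction R)) r =
      -((F 0 / R) ^ 4 * radialEigenfunction R r ^ 3) := by
  have hu := mapsTo_radialEigenfunction_Ioo hR hr
  have hq := one_sub_pow_four_pos hu.1.le hu.2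
  have hslope :=
    ((contDiffAt_quarticSlope (F 0 / R) hq.ne').differentiableAt one_ne_zero).hasDerivAt
  rw [(hasDerivAt_radialEigenfunction hR hr).deriv, (hasDerivAt_deriv_of_hasDerivAt_comp
    (isOpen_Ioo.mem_nhds hr) (fun _ hr => hasDerivAt_radialEigenfunction hR hr) hslope).deriv]
  linear_combination quarticSlope_pow_three_mul_deriv (F 0 / R) hq

theorem stmt19 (R : ℝ) (hR : 0 < R) :
    ∃ u : ℝ → ℝ,
      (∀ r ∈ Set.Icc (0:ℝ) R, u r ∈ Set.Icc (0:ℝ) 1 ∧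
        F (u r) = betaConst ^ ((1:ℝ)/4) * r / R) ∧
      ContinuousOn u (Set.Icc 0 R) ∧
      StrictAntiOn u (Set.Icc 0 R) ∧
      u 0 = 1 ∧ u R = 0 ∧
      ContDiffOn ℝ 2 u (Set.Ioo 0 R) ∧
      ∀ r ∈ Set.Ioo (0:ℝ) R,
        (deriv u r) ^ 2 * deriv (deriv u) r + (betaConst / R ^ 4) * u r ^ 3 = 0 := by
  refine ⟨radialEigenfunction R, fun r hr => ⟨invF_mem_Icc _, ?_⟩,
    (continuous_invF.comp (by fun_prop)).continuousOn, strictAntiOn_radialEigenfunction hR,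
    by simp [radialEigenfunction, invF_zero], by simp [radialEigenfunction, hR.ne', invF_F_zero],
    contDiffOn_radialEigenfunction hR, fun r hr => ?_⟩
  · rw [betaConst_rpow_quarter]
    exact rightInvOn_invF (mapsTo_mul_div_Icc F_zero_pos.le hR hr)
  · rw [deriv_sq_mul_deriv_deriv_radialEigenfunction hR hr, betaConst_eq, div_pow]
    ring
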